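/- Deterministic bound for the quadratic term. In the setting of the deterministic perturbation framework, additionally let Û₁ ∈ ℝ^{p₁×r₁} have orthonormal columns, let Λ̂ be an invertible r₁×r₁ matrix with smallest singular value at least λ/2, fix m ∈ {1,…,p₁}, and set ξ := ‖e_mᵀ Z₁ P̃‖₂ and Q := (I − U₁U₁ᵀ)·Z₁·P̂·Z₁ᵀ·Û₁·Λ̂^{-2}. Then ‖e_mᵀ Q‖₂ ≤ (4/λ²)·‖U₁‖_{2,∞}·τ₁·(τ₁·η + ‖U₁ᵀZ₁(P_{U₂}⊗P_{U₃})‖) + (16/λ²)·τ₁²·η̃ + (4/λ²)·ξ·( τ₁·‖sinΘ(Û₁,U₁)‖ + τ₁·η + ‖U₁ᵀZ₁(P_{U₂}⊗P_{U₃})‖ ). -/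

import Mathlib

/-!
Write `P̂ = P_{Û₂} ⊗ P_{Û₃}` and `Y = P̂ Z₁ᵀ Û₁ Λ̂⁻²`. As `P̂` is idempotent,
`Q = -U₁ (U₁ᵀ Z₁ P̂) Y + Z₁ (I - P̃) P̂ Y + (Z₁ P̃) Y`, and the `m`-th rows of the three terms are
bounded by `‖U₁‖_{2,∞} ‖U₁ᵀ Z₁ P̂‖ ‖Y‖`, `‖Z₁ (I - P̃) P̂‖ ‖Y‖` and `ξ ‖Y‖`.

Each norm of `Z₁` against a product of projections is reduced to `τ₁`: the difference
`(I - P_{W₂} ⊗ P_{W₃}) P̂` is a sum of two Kronecker products, each left fixed by a Kronecker product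
of projections of ranks at most `2r₂` and `2r₃`; this gives `‖Z₁ (I - P̃) P̂‖ ≤ τ₁ η̃` and
`‖U₁ᵀ Z₁ P̂‖ ≤ τ₁ η + ‖U₁ᵀ Z₁ (P_{U₂} ⊗ P_{U₃})‖`. Finally `‖Λ̂⁻¹‖ ≤ 2/λ`, and
`‖Y‖ ≤ ‖Û₁ᵀ Z₁ P̂‖ · 4/λ²` where `‖Û₁ᵀ Z₁ P̂‖` is at most `τ₁`, and also at most
`τ₁ ‖sinΘ(Û₁, U₁)‖ + ‖U₁ᵀ Z₁ P̂‖` (using `‖sinΘ(U₁, Û₁)‖ = ‖sinΘ(Û₁, U₁)‖`, valid because both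
subspaces have dimension `r₁`).
-/

open Matrix
open scoped BigOperators Kronecker

noncomputable section

/-- Euclidean norm of a finitely-indexed real vector. -/
def enorm2 {n : Type*} [Fintype n] (v : n → ℝ) : ℝ := Real.sqrt (∑ i, (v i) ^ 2)

/-- `‖M‖_{2,∞}`: largest Euclidean norm of a row of `M`. -/
def twoInf {m n : Type*} [Fintype m] [Fintype n] (M : Matrix m n ℝ) : ℝ :=
  sSup {c | ∃ i, c = enorm2 (M i)}

/-- Spectral norm of a matrix. -/
def spec {m n : Type*} [Fintype m] [Fintype n] (M : Matrix m n ℝ) : ℝ :=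
  sSup {c | ∃ v : n → ℝ, enorm2 v ≤ 1 ∧ c = enorm2 (M.mulVec v)}

/-- `j`-th largest singular value (for `j ≥ 1`), via the Courant–Fischer principle. -/
def sval {m n : Type*} [Fintype m] [Fintype n] (M : Matrix m n ℝ) (j : ℕ) : ℝ :=
  sSup {c | 0 ≤ c ∧ ∃ V : Submodule ℝ (n → ℝ), Module.finrank ℝ V = j ∧
      ∀ v ∈ V, c * enorm2 v ≤ enorm2 (M.mulVec v)}

/-- `M` has orthonormal columns. -/
def OrthoCols {m : Type*} {r : ℕ} [Fintype m] (U : Matrix m (Fin r) ℝ) : Prop :=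
  Uᵀ * U = 1

/-- A compact SVD of a rank-`r` matrix. -/
def IsCompactSVD {m n : Type*} {r : ℕ} [Fintype m] [Fintype n]
    (M : Matrix m n ℝ) (U : Matrix m (Fin r) ℝ) (L : Matrix (Fin r) (Fin r) ℝ)
    (V : Matrix n (Fin r) ℝ) : Prop :=
  OrthoCols U ∧ OrthoCols V ∧ (∀ i j, i ≠ j → L i j = 0) ∧ (∀ i, 0 < L i i) ∧
    M = U * L * Vᵀ

/-- An orthogonal projection matrix. -/
def IsOrthProj {n : Type*} [Fintype n] (P : Matrix n n ℝ) : Prop :=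
  Pᵀ = P ∧ P * P = P

/-- `τ₁`: the largest spectral norm of `Z` compressed by a Kronecker product of
orthogonal projections of ranks at most `2r₂` and `2r₃`. -/
def tauP {p₁ p₂ p₃ : ℕ} (r₂ r₃ : ℕ) (Z : Matrix (Fin p₁) (Fin p₂ × Fin p₃) ℝ) : ℝ :=
  sSup {c | ∃ (P : Matrix (Fin p₂) (Fin p₂) ℝ) (Q : Matrix (Fin p₃) (Fin p₃) ℝ),
    IsOrthProj P ∧ IsOrthProj Q ∧ P.rank ≤ 2 * r₂ ∧ Q.rank ≤ 2 * r₃ ∧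
    c = spec (Z * (P ⊗ₖ Q))}

/-- `‖sinΘ(U,V)‖ = ‖(I − UUᵀ)V‖`. -/
def sinTheta {m : Type*} {r s : ℕ} [Fintype m] [DecidableEq m]
    (U : Matrix m (Fin r) ℝ) (V : Matrix m (Fin s) ℝ) : ℝ :=
  spec ((1 - U * Uᵀ) * V)

/-- `Z'` is obtained from `Z` by setting a subset of its rows to zero. -/
def ZeroRows {m n : Type*} (Z Z' : Matrix m n ℝ) : Prop :=
  ∃ s : Set m, ∀ i, (i ∈ s ∧ ∀ j, Z' i j = 0) ∨ (i ∉ s ∧ ∀ j, Z' i j = Z i j)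

/-- `Z'` is obtained from `Z` by setting a subset of its columns to zero. -/
def ZeroCols {m n : Type*} (Z Z' : Matrix m n ℝ) : Prop :=
  ∃ s : Set n, ∀ j, (j ∈ s ∧ ∀ i, Z' i j = 0) ∨ (j ∉ s ∧ ∀ i, Z' i j = Z i j)

/-- Columns of `U` are orthonormal eigenvectors of the symmetric matrix `A` associated
with its `r` largest eigenvalues (with multiplicity). -/
def IsTopEigvecs {n : Type*} {r : ℕ} [Fintype n] (A : Matrix n n ℝ)
    (U : Matrix n (Fin r) ℝ) : Prop :=
  OrthoCols U ∧ ∃ D : Fin r → ℝ, A * U = U * Matrix.diagonal D ∧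
    ∀ (v : n → ℝ) (c : ℝ), v ≠ 0 → A.mulVec v = c • v → Uᵀ.mulVec v = 0 → ∀ j, c ≤ D j

/-- `U` is a matrix of top-`r` left singular vectors of `M`. -/
def IsTopLeftSingular {m q : Type*} {r : ℕ} [Fintype m] [Fintype q]
    (M : Matrix m q ℝ) (U : Matrix m (Fin r) ℝ) : Prop :=
  IsTopEigvecs (M * Mᵀ) U


open scoped Matrix.Norms.L2Operator

section EuclideanNorm

variable {n : Type*} [Fintype n]

lemma enorm2_eq_norm (v : n → ℝ) : enorm2 v = ‖WithLp.toLp 2 v‖ := by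
  simp [enorm2, EuclideanSpace.norm_eq]

lemma enorm2_nonneg (v : n → ℝ) : 0 ≤ enorm2 v := Real.sqrt_nonneg _

lemma enorm2_eq_zero {v : n → ℝ} : enorm2 v = 0 ↔ v = 0 := by
  rw [enorm2_eq_norm, norm_eq_zero, WithLp.toLp_eq_zero]

lemma enorm2_add_le (u v : n → ℝ) : enorm2 (u + v) ≤ enorm2 u + enorm2 v := by
  simpa only [enorm2_eq_norm, WithLp.toLp_add] using norm_add_le _ _

lemma sq_enorm2 (v : n → ℝ) : enorm2 v ^ 2 = ∑ i, v i ^ 2 :=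
  Real.sq_sqrt (Finset.sum_nonneg fun _ _ => sq_nonneg _)

lemma sq_enorm2_eq_dotProduct (v : n → ℝ) : enorm2 v ^ 2 = v ⬝ᵥ v := by
  rw [sq_enorm2]
  simp [dotProduct, sq]

lemma sq_enorm2_mulVec {m : Type*} [Fintype m] (M : Matrix m n ℝ) (v : n → ℝ) :
    enorm2 (M *ᵥ v) ^ 2 = v ⬝ᵥ ((Mᵀ * M) *ᵥ v) := by
  rw [sq_enorm2_eq_dotProduct, ← mulVec_mulVec, dotProduct_mulVec v Mᵀ, vecMul_transpose]

end EuclideanNorm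

section OperatorNorm

variable {m n l : Type*} [Fintype m] [Fintype n] [Fintype l]

lemma enorm2_mulVec_le [DecidableEq n] (M : Matrix m n ℝ) (v : n → ℝ) :
    enorm2 (M *ᵥ v) ≤ ‖M‖ * enorm2 v := by
  rw [enorm2_eq_norm, enorm2_eq_norm]
  exact M.l2_opNorm_mulVec (WithLp.toLp 2 v)

lemma Matrix.l2_opNorm_le_of_enorm2_mulVec_le [DecidableEq n] {M : Matrix m n ℝ} {c : ℝ}
    (hc : 0 ≤ c) (h : ∀ v, enorm2 (M *ᵥ v) ≤ c * enorm2 v) : ‖M‖ ≤ c := by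
  refine ContinuousLinearMap.opNorm_le_bound _ hc fun x => ?_
  have := h x.ofLp
  rwa [enorm2_eq_norm, enorm2_eq_norm] at this

lemma spec_eq_norm [DecidableEq n] (M : Matrix m n ℝ) : spec M = ‖M‖ := by
  rw [l2_opNorm_def, ← ContinuousLinearMap.sSup_unitClosedBall_eq_norm]
  refine congrArg sSup (Set.ext fun c => ?_)
  simp only [Set.mem_ofPred_eq, Set.mem_image, Metric.mem_closedBall, dist_zero_right,
    enorm2_eq_norm]
  constructor
  · rintro ⟨v, hv, rfl⟩
    exact ⟨WithLp.toLp 2 v, hv, rfl⟩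
  · rintro ⟨x, hx, rfl⟩
    exact ⟨x.ofLp, hx, rfl⟩

lemma Matrix.l2_opNorm_transpose [DecidableEq m] [DecidableEq n] (A : Matrix m n ℝ) :
    ‖Aᵀ‖ = ‖A‖ := by
  simpa using A.l2_opNorm_conjTranspose

lemma enorm2_row_le_twoInf (M : Matrix m n ℝ) (i : m) : enorm2 (M i) ≤ twoInf M := by
  refine le_csSup ((Set.finite_range fun i => enorm2 (M i)).subset ?_).bddAbove ⟨i, rfl⟩
  rintro _ ⟨j, rfl⟩
  exact ⟨j, rfl⟩

end OperatorNorm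

lemma enorm2_row_mul_le {m n l : Type*} [Fintype n] [Fintype l] [DecidableEq n] [DecidableEq l]
    (X : Matrix m n ℝ) (Y : Matrix n l ℝ) (i : m) : enorm2 ((X * Y) i) ≤ enorm2 (X i) * ‖Y‖ := by
  rw [mul_comm, ← Y.l2_opNorm_transpose,
    show (X * Y) i = Yᵀ *ᵥ X i by ext; simp [mul_apply, mulVec, dotProduct, mul_comm]]
  exact enorm2_mulVec_le _ _

lemma enorm2_row_le_norm {m n : Type*} [Fintype m] [Fintype n] [DecidableEq m] [DecidableEq n]
    (M : Matrix m n ℝ) (i : m) : enorm2 (M i) ≤ ‖M‖ := by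
  simpa [enorm2, one_apply] using enorm2_row_mul_le (1 : Matrix m m ℝ) M i

section Kronecker

variable {ι m n : Type*} [Fintype ι] [Fintype m] [Fintype n] [DecidableEq ι] [DecidableEq n]

lemma Matrix.l2_opNorm_one_kronecker_le (B : Matrix m n ℝ) :
    ‖(1 : Matrix ι ι ℝ) ⊗ₖ B‖ ≤ ‖B‖ := by
  refine l2_opNorm_le_of_enorm2_mulVec_le (norm_nonneg B) fun v => ?_
  have hrow : ∀ i j, ((1 ⊗ₖ B) *ᵥ v) (i, j) = (B *ᵥ fun k => v (i, k)) j := by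
    intro i j
    simp [mulVec, dotProduct, Fintype.sum_prod_type, one_apply, ite_mul]
  refine (pow_le_pow_iff_left₀ (enorm2_nonneg _) (mul_nonneg (norm_nonneg _) (enorm2_nonneg _))
    two_ne_zero).mp ?_
  calc enorm2 ((1 ⊗ₖ B) *ᵥ v) ^ 2 = ∑ i : ι, enorm2 (B *ᵥ fun k => v (i, k)) ^ 2 := by
        simp only [sq_enorm2, Fintype.sum_prod_type, hrow]
    _ ≤ ∑ i : ι, (‖B‖ * enorm2 fun k => v (i, k)) ^ 2 := by
        gcongr with i
        · exact enorm2_nonneg _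
        · exact enorm2_mulVec_le _ _
    _ = (‖B‖ * enorm2 v) ^ 2 := by
        simp only [mul_pow, sq_enorm2, ← Finset.mul_sum, Fintype.sum_prod_type]

lemma Matrix.l2_opNorm_kronecker_one_le (A : Matrix m n ℝ) :
    ‖A ⊗ₖ (1 : Matrix ι ι ℝ)‖ ≤ ‖A‖ := by
  refine l2_opNorm_le_of_enorm2_mulVec_le (norm_nonneg A) fun v => ?_
  have hrow : ∀ i j, ((A ⊗ₖ 1) *ᵥ v) (i, j) = (A *ᵥ fun k => v (k, j)) i := by
    intro i j
    simp [mulVec, dotProduct, Fintype.sum_prod_type, one_apply]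
  refine (pow_le_pow_iff_left₀ (enorm2_nonneg _) (mul_nonneg (norm_nonneg _) (enorm2_nonneg _))
    two_ne_zero).mp ?_
  calc enorm2 ((A ⊗ₖ 1) *ᵥ v) ^ 2 = ∑ j : ι, enorm2 (A *ᵥ fun k => v (k, j)) ^ 2 := by
        simp only [sq_enorm2, Fintype.sum_prod_type_right, hrow]
    _ ≤ ∑ j : ι, (‖A‖ * enorm2 fun k => v (k, j)) ^ 2 := by
        gcongr with j
        · exact enorm2_nonneg _
        · exact enorm2_mulVec_le _ _
    _ = (‖A‖ * enorm2 v) ^ 2 := by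
        simp only [mul_pow, sq_enorm2, ← Finset.mul_sum, Fintype.sum_prod_type_right]

end Kronecker

lemma Matrix.l2_opNorm_kronecker_le {m₂ n₂ m₃ n₃ : Type*} [Fintype m₂] [Fintype n₂] [Fintype m₃]
    [Fintype n₃] [DecidableEq m₂] [DecidableEq n₂] [DecidableEq m₃] [DecidableEq n₃]
    (A : Matrix m₂ n₂ ℝ) (B : Matrix m₃ n₃ ℝ) : ‖A ⊗ₖ B‖ ≤ ‖A‖ * ‖B‖ :=
  calc ‖A ⊗ₖ B‖ = ‖(A ⊗ₖ (1 : Matrix m₃ m₃ ℝ)) * ((1 : Matrix n₂ n₂ ℝ) ⊗ₖ B)‖ := by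
        rw [← mul_kronecker_mul, Matrix.mul_one, Matrix.one_mul]
    _ ≤ ‖A‖ * ‖B‖ := (l2_opNorm_mul _ _).trans <| mul_le_mul (l2_opNorm_kronecker_one_le A)
        (l2_opNorm_one_kronecker_le B) (norm_nonneg _) (norm_nonneg _)

section Projections

variable {n : Type*} [Fintype n]

lemma isOrthProj_iff_isStarProjection {P : Matrix n n ℝ} :
    IsOrthProj P ↔ IsStarProjection P := by
  rw [IsOrthProj, isStarProjection_iff, IsIdempotentElem, IsSelfAdjoint, star_eq_conjTranspose,
    conjTranspose_eq_transpose_of_trivial, and_comm]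

lemma IsOrthProj.norm_le_one [DecidableEq n] {P : Matrix n n ℝ} (hP : IsOrthProj P) : ‖P‖ ≤ 1 :=
  (isOrthProj_iff_isStarProjection.mp hP).norm_le

lemma IsOrthProj.one_sub [DecidableEq n] {P : Matrix n n ℝ} (hP : IsOrthProj P) :
    IsOrthProj (1 - P) :=
  isOrthProj_iff_isStarProjection.mpr (isOrthProj_iff_isStarProjection.mp hP).one_sub

lemma IsOrthProj.kronecker {m : Type*} [Fintype m] {P : Matrix n n ℝ} {Q : Matrix m m ℝ}
    (hP : IsOrthProj P) (hQ : IsOrthProj Q) : IsOrthProj (P ⊗ₖ Q) :=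
  ⟨by rw [← kroneckerMap_transpose, hP.1, hQ.1], by rw [← mul_kronecker_mul, hP.2, hQ.2]⟩

lemma OrthoCols.isOrthProj {r : ℕ} {U : Matrix n (Fin r) ℝ} (hU : OrthoCols U) :
    IsOrthProj (U * Uᵀ) := by
  refine ⟨by rw [transpose_mul, transpose_transpose], ?_⟩
  rw [Matrix.mul_assoc, ← Matrix.mul_assoc Uᵀ, hU, Matrix.one_mul]

lemma OrthoCols.norm_le_one [DecidableEq n] {r : ℕ} {U : Matrix n (Fin r) ℝ} (hU : OrthoCols U) :
    ‖U‖ ≤ 1 := by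
  have h : ‖U‖ * ‖U‖ ≤ 1 := by
    rw [← l2_opNorm_conjTranspose_mul_self, conjTranspose_eq_transpose_of_trivial, hU]
    exact IsStarProjection.norm_le _ (.one _)
  nlinarith [norm_nonneg U]

lemma OrthoCols.norm_transpose_mul_le [DecidableEq n] {k : Type*} [Fintype k] [DecidableEq k]
    {r : ℕ} {U : Matrix n (Fin r) ℝ} (hU : OrthoCols U) (X : Matrix n k ℝ) : ‖Uᵀ * X‖ ≤ ‖X‖ := by
  refine (l2_opNorm_mul _ _).trans (mul_le_of_le_one_left (norm_nonneg _) ?_)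
  rw [l2_opNorm_transpose]
  exact hU.norm_le_one

lemma rank_mul_transpose_le {r : ℕ} (U : Matrix n (Fin r) ℝ) : (U * Uᵀ).rank ≤ r :=
  (rank_mul_le_left U Uᵀ).trans (by simpa using U.rank_le_card_width)

lemma exists_isOrthProj_rank_le_mul_eq_self [DecidableEq n] {ι : Type*} [Fintype ι]
    (M : Matrix n ι ℝ) :
    ∃ K : Matrix n n ℝ, IsOrthProj K ∧ K.rank ≤ Fintype.card ι ∧ K * M = M := by
  let S : Submodule ℝ (EuclideanSpace ℝ n) :=
    Submodule.span ℝ (Set.range fun j => WithLp.toLp 2 (Mᵀ j))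
  let K := (toEuclideanCLM (𝕜 := ℝ) (n := n)).symm S.starProjection
  have hK : toEuclideanCLM (𝕜 := ℝ) K = S.starProjection := StarAlgEquiv.apply_symm_apply _ _
  refine ⟨K, ?_, ?_, ?_⟩
  · have h := isStarProjection_starProjection (U := S)
    rw [← hK] at h
    exact isOrthProj_iff_isStarProjection.mpr
      ⟨by simpa [IsIdempotentElem, ← map_mul] using h.isIdempotentElem,
        by simpa [IsSelfAdjoint, ← map_star] using h.isSelfAdjoint⟩
  · rw [rank_eq_finrank_range_toLin K (EuclideanSpace.basisFun n ℝ).toBasis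
      (EuclideanSpace.basisFun n ℝ).toBasis, ← toEuclideanLin_eq_toLin_orthonormal,
      ← coe_toEuclideanCLM_eq_toEuclideanLin, hK, Submodule.range_starProjection]
    exact finrank_range_le_card _
  · ext i j
    have h : S.starProjection (WithLp.toLp 2 (Mᵀ j)) = WithLp.toLp 2 (Mᵀ j) :=
      Submodule.starProjection_eq_self_iff.mpr (Submodule.subset_span ⟨j, rfl⟩)
    rw [← hK, toEuclideanCLM_toLp] at h
    simpa [mulVec, dotProduct, mul_apply] using congrFun (WithLp.toLp_injective 2 h) i

lemma exists_isOrthProj_rank_le_two_mul [DecidableEq n] {r : ℕ} (W U : Matrix n (Fin r) ℝ) :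
    ∃ K : Matrix n n ℝ, IsOrthProj K ∧ K.rank ≤ 2 * r ∧ K * W = W ∧ K * U = U := by
  obtain ⟨K, hK, hrK, hKWU⟩ := exists_isOrthProj_rank_le_mul_eq_self (fromCols W U)
  rw [mul_fromCols, fromCols_ext_iff] at hKWU
  exact ⟨K, hK, by simpa [two_mul] using hrK, hKWU⟩

end Projections

section LowerBounds

variable {n : Type*} [Fintype n] [DecidableEq n]

lemma isUnit_det_of_le_enorm2_mulVec {B : Matrix n n ℝ} {c : ℝ} (hc : 0 < c)
    (h : ∀ v, c * enorm2 v ≤ enorm2 (B *ᵥ v)) : IsUnit B.det := by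
  refine isUnit_iff_ne_zero.mpr fun hdet => ?_
  obtain ⟨v, hv, hBv⟩ := exists_mulVec_eq_zero_iff.mpr hdet
  have := h v
  rw [hBv, enorm2_eq_zero.mpr rfl] at this
  exact hv (enorm2_eq_zero.mp
    (le_antisymm (nonpos_of_mul_nonpos_right this hc) (enorm2_nonneg v)))

lemma norm_inv_le_of_le_enorm2_mulVec {B : Matrix n n ℝ} {c : ℝ} (hc : 0 < c)
    (h : ∀ v, c * enorm2 v ≤ enorm2 (B *ᵥ v)) : ‖B⁻¹‖ ≤ c⁻¹ := by
  refine l2_opNorm_le_of_enorm2_mulVec_le (inv_nonneg.mpr hc.le) fun w => ?_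
  rw [inv_mul_eq_div, le_div_iff₀' hc]
  simpa [mulVec_mulVec, mul_nonsing_inv _ (isUnit_det_of_le_enorm2_mulVec hc h)]
    using h (B⁻¹ *ᵥ w)

/-- Via `‖B⁻¹‖ = ‖(Bᵀ)⁻¹‖`; false for non-square `B`. -/
lemma le_enorm2_mulVec_of_le_enorm2_transpose_mulVec {B : Matrix n n ℝ} {c : ℝ} (hc : 0 ≤ c)
    (h : ∀ v, c * enorm2 v ≤ enorm2 (Bᵀ *ᵥ v)) (v : n → ℝ) : c * enorm2 v ≤ enorm2 (B *ᵥ v) := by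
  rcases hc.eq_or_lt with rfl | hc
  · simpa using enorm2_nonneg _
  have hB : IsUnit B.det := by
    simpa using isUnit_det_of_le_enorm2_mulVec hc h
  have hinv : ‖B⁻¹‖ ≤ c⁻¹ := by
    simpa [← transpose_nonsing_inv, l2_opNorm_transpose] using
      norm_inv_le_of_le_enorm2_mulVec hc h
  calc c * enorm2 v = c * enorm2 (B⁻¹ *ᵥ (B *ᵥ v)) := by
        rw [mulVec_mulVec, nonsing_inv_mul _ hB, one_mulVec]
    _ ≤ c * (c⁻¹ * enorm2 (B *ᵥ v)) := by
        gcongr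
        exact (enorm2_mulVec_le _ _).trans (by gcongr; exact enorm2_nonneg _)
    _ = enorm2 (B *ᵥ v) := by field_simp

end LowerBounds

lemma le_enorm2_mulVec_of_le_sval {m n : Type*} [Fintype m] [Fintype n] {L : Matrix m n ℝ}
    {c : ℝ} (hc : c ≤ sval L (Fintype.card n)) (v : n → ℝ) :
    c * enorm2 v ≤ enorm2 (L *ᵥ v) := by
  rcases (enorm2_nonneg v).eq_or_lt with hv | hv
  · rw [← hv, mul_zero]
    exact enorm2_nonneg _
  rw [← le_div_iff₀ hv]
  refine hc.trans (csSup_le ⟨0, le_rfl, ⊤, ?_, fun w _ => ?_⟩ ?_)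
  · rw [finrank_top, Module.finrank_fintype_fun_eq_card]
  · rw [zero_mul]
    exact enorm2_nonneg _
  · rintro a ⟨-, V, hV, hLV⟩
    rw [Submodule.eq_top_of_finrank_eq (hV.trans (Module.finrank_fintype_fun_eq_card ℝ).symm)]
      at hLV
    rw [le_div_iff₀ hv]
    exact hLV v trivial

lemma norm_inv_le_of_le_sval {n : Type*} [Fintype n] [DecidableEq n] {L : Matrix n n ℝ} {c : ℝ}
    (hc : 0 < c) (h : c ≤ sval L (Fintype.card n)) : ‖L⁻¹‖ ≤ c⁻¹ :=
  norm_inv_le_of_le_enorm2_mulVec hc (le_enorm2_mulVec_of_le_sval h)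

section SinTheta

variable {n : Type*} [Fintype n] [DecidableEq n]

lemma sinTheta_eq_norm {r s : ℕ} (U : Matrix n (Fin r) ℝ) (V : Matrix n (Fin s) ℝ) :
    sinTheta U V = ‖(1 - U * Uᵀ) * V‖ :=
  spec_eq_norm _

lemma sinTheta_nonneg {r s : ℕ} (U : Matrix n (Fin r) ℝ) (V : Matrix n (Fin s) ℝ) :
    0 ≤ sinTheta U V := by
  rw [sinTheta_eq_norm]
  exact norm_nonneg _

lemma sq_enorm2_one_sub_mul_mulVec {r s : ℕ} {U : Matrix n (Fin r) ℝ} {V : Matrix n (Fin s) ℝ}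
    (hU : OrthoCols U) (hV : OrthoCols V) (x : Fin r → ℝ) :
    enorm2 (((1 - V * Vᵀ) * U) *ᵥ x) ^ 2 = enorm2 x ^ 2 - enorm2 ((Vᵀ * U) *ᵥ x) ^ 2 := by
  have hP := hV.isOrthProj
  have hG : ((1 - V * Vᵀ) * U)ᵀ * ((1 - V * Vᵀ) * U) = 1 - (Vᵀ * U)ᵀ * (Vᵀ * U) := by
    simp only [transpose_mul, transpose_sub, transpose_one, hP.1, transpose_transpose]
    rw [Matrix.mul_assoc, ← Matrix.mul_assoc (1 - V * Vᵀ),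
      hP.one_sub.2, Matrix.sub_mul,
      Matrix.one_mul, Matrix.mul_sub, hU, Matrix.mul_assoc V, Matrix.mul_assoc]
  rw [sq_enorm2_mulVec, sq_enorm2_mulVec, hG, sub_mulVec, one_mulVec, dotProduct_sub,
    sq_enorm2_eq_dotProduct]

/-- With `B = VᵀU`, `‖(1 - VVᵀ)Ux‖² = ‖x‖² - ‖Bx‖²` and likewise for `Bᵀ = UᵀV`; so
`s = ‖(1 - UUᵀ)V‖` gives `‖Bᵀy‖ ≥ √(1 - s²)‖y‖`, which passes to `B` because `B` is square. -/
lemma sinTheta_le_sinTheta {r : ℕ} {U V : Matrix n (Fin r) ℝ} (hU : OrthoCols U)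
    (hV : OrthoCols V) : sinTheta V U ≤ sinTheta U V := by
  rw [sinTheta_eq_norm, sinTheta_eq_norm]
  set s := ‖(1 - U * Uᵀ) * V‖
  have hs : s ≤ 1 := by
    exact (l2_opNorm_mul _ _).trans
      (mul_le_one₀ hU.isOrthProj.one_sub.norm_le_one (norm_nonneg _) hV.norm_le_one)
  have hs0 : 0 ≤ s := norm_nonneg _
  have hlow : ∀ y, √(1 - s ^ 2) * enorm2 y ≤ enorm2 ((Vᵀ * U)ᵀ *ᵥ y) := by
    intro y
    rw [transpose_mul, transpose_transpose]
    refine (pow_le_pow_iff_left₀ (mul_nonneg (Real.sqrt_nonneg _) (enorm2_nonneg _))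
      (enorm2_nonneg _) two_ne_zero).mp ?_
    have h1 := sq_enorm2_one_sub_mul_mulVec hV hU y
    have h2 := pow_le_pow_left₀ (enorm2_nonneg _) (enorm2_mulVec_le ((1 - U * Uᵀ) * V) y) 2
    rw [mul_pow, Real.sq_sqrt (by nlinarith)]
    nlinarith
  refine l2_opNorm_le_of_enorm2_mulVec_le hs0 fun x => ?_
  refine (pow_le_pow_iff_left₀ (enorm2_nonneg _) (mul_nonneg hs0 (enorm2_nonneg _))
    two_ne_zero).mp ?_
  have h1 := pow_le_pow_left₀ (mul_nonneg (Real.sqrt_nonneg _) (enorm2_nonneg _))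
    (le_enorm2_mulVec_of_le_enorm2_transpose_mulVec (Real.sqrt_nonneg _) hlow x) 2
  rw [mul_pow, Real.sq_sqrt (by nlinarith)] at h1
  rw [mul_pow, sq_enorm2_one_sub_mul_mulVec hU hV x]
  nlinarith

lemma sinTheta_comm {r : ℕ} {U V : Matrix n (Fin r) ℝ} (hU : OrthoCols U) (hV : OrthoCols V) :
    sinTheta U V = sinTheta V U :=
  le_antisymm (sinTheta_le_sinTheta hV hU) (sinTheta_le_sinTheta hU hV)

lemma norm_one_sub_mul_mul_transpose_le_sinTheta {r s : ℕ} (W : Matrix n (Fin s) ℝ)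
    {U : Matrix n (Fin r) ℝ} (hU : OrthoCols U) : ‖(1 - W * Wᵀ) * (U * Uᵀ)‖ ≤ sinTheta W U := by
  rw [sinTheta_eq_norm, ← Matrix.mul_assoc]
  refine (l2_opNorm_mul _ _).trans (mul_le_of_le_one_right (norm_nonneg _) ?_)
  rw [l2_opNorm_transpose]
  exact hU.norm_le_one

lemma norm_transpose_mul_le_sinTheta_mul_add {k : Type*} [Fintype k] [DecidableEq k] {r : ℕ}
    {U Ũ : Matrix n (Fin r) ℝ} (hU : OrthoCols U) (hŨ : OrthoCols Ũ) (X : Matrix n k ℝ) :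
    ‖Ũᵀ * X‖ ≤ sinTheta Ũ U * ‖X‖ + ‖Uᵀ * X‖ := by
  have hsplit : Ũᵀ * X = ((1 - U * Uᵀ) * Ũ)ᵀ * X + Ũᵀ * U * (Uᵀ * X) := by
    simp only [transpose_mul, transpose_sub, transpose_one, transpose_transpose, Matrix.sub_mul,
      Matrix.mul_one, Matrix.mul_assoc]
    abel
  rw [hsplit, sinTheta_comm hŨ hU, sinTheta_eq_norm, ← l2_opNorm_transpose ((1 - U * Uᵀ) * Ũ)]
  refine (norm_add_le _ _).trans (add_le_add (l2_opNorm_mul _ _) ?_)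
  rw [Matrix.mul_assoc]
  exact (hŨ.norm_transpose_mul_le _).trans
    ((l2_opNorm_mul _ _).trans (mul_le_of_le_one_left (norm_nonneg _) hU.norm_le_one))

end SinTheta

section TuckerCompression

variable {p₁ p₂ p₃ r₂ r₃ : ℕ} (Z : Matrix (Fin p₁) (Fin p₂ × Fin p₃) ℝ)

lemma norm_mul_kronecker_le_tauP {P : Matrix (Fin p₂) (Fin p₂) ℝ}
    {Q : Matrix (Fin p₃) (Fin p₃) ℝ} (hP : IsOrthProj P) (hQ : IsOrthProj Q)
    (hrP : P.rank ≤ 2 * r₂) (hrQ : Q.rank ≤ 2 * r₃) : ‖Z * (P ⊗ₖ Q)‖ ≤ tauP r₂ r₃ Z := by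
  refine le_csSup ⟨‖Z‖, ?_⟩ ⟨P, Q, hP, hQ, hrP, hrQ, (spec_eq_norm _).symm⟩
  rintro _ ⟨P', Q', hP', hQ', -, -, rfl⟩
  rw [spec_eq_norm]
  exact (l2_opNorm_mul _ _).trans
    (mul_le_of_le_one_right (norm_nonneg _) (hP'.kronecker hQ').norm_le_one)

lemma tauP_nonneg : 0 ≤ tauP r₂ r₃ Z :=
  (norm_nonneg _).trans <| norm_mul_kronecker_le_tauP Z (P := 0) (Q := 0)
    ⟨transpose_zero, mul_zero 0⟩ ⟨transpose_zero, mul_zero 0⟩ (by simp) (by simp)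

lemma norm_mul_kronecker_mul_transpose_le_tauP {U₂ : Matrix (Fin p₂) (Fin r₂) ℝ}
    {U₃ : Matrix (Fin p₃) (Fin r₃) ℝ} (hU₂ : OrthoCols U₂) (hU₃ : OrthoCols U₃) :
    ‖Z * ((U₂ * U₂ᵀ) ⊗ₖ (U₃ * U₃ᵀ))‖ ≤ tauP r₂ r₃ Z :=
  norm_mul_kronecker_le_tauP Z hU₂.isOrthProj hU₃.isOrthProj
    ((rank_mul_transpose_le U₂).trans (by omega)) ((rank_mul_transpose_le U₃).trans (by omega))

lemma norm_mul_kronecker_le_tauP_mul {P : Matrix (Fin p₂) (Fin p₂) ℝ}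
    {Q : Matrix (Fin p₃) (Fin p₃) ℝ} (hP : IsOrthProj P) (hQ : IsOrthProj Q)
    (hrP : P.rank ≤ 2 * r₂) (hrQ : Q.rank ≤ 2 * r₃)
    {ι₂ ι₃ : Type*} [Fintype ι₂] [Fintype ι₃] [DecidableEq ι₂] [DecidableEq ι₃]
    {A : Matrix (Fin p₂) ι₂ ℝ} {B : Matrix (Fin p₃) ι₃ ℝ} (hA : P * A = A) (hB : Q * B = B) :
    ‖Z * (A ⊗ₖ B)‖ ≤ tauP r₂ r₃ Z * (‖A‖ * ‖B‖) :=
  calc ‖Z * (A ⊗ₖ B)‖ = ‖Z * (P ⊗ₖ Q) * (A ⊗ₖ B)‖ := by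
        rw [Matrix.mul_assoc, ← mul_kronecker_mul, hA, hB]
    _ ≤ tauP r₂ r₃ Z * (‖A‖ * ‖B‖) :=
        (l2_opNorm_mul _ _).trans (mul_le_mul (norm_mul_kronecker_le_tauP Z hP hQ hrP hrQ)
          (l2_opNorm_kronecker_le A B) (norm_nonneg _) (tauP_nonneg Z))

lemma one_sub_kronecker_mul_kronecker {m n : Type*} [Fintype m] [Fintype n] [DecidableEq m]
    [DecidableEq n] (A C : Matrix m m ℝ) (B D : Matrix n n ℝ) :
    (1 - A ⊗ₖ B) * (C ⊗ₖ D) = ((1 - A) * C) ⊗ₖ D + (A * C) ⊗ₖ ((1 - B) * D) := by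
  simp only [Matrix.sub_mul, Matrix.one_mul, ← mul_kronecker_mul]
  ext ⟨i, j⟩ ⟨k, l⟩
  simp only [Matrix.sub_apply, Matrix.add_apply, kroneckerMap_apply]
  ring

variable {W₂ U₂ : Matrix (Fin p₂) (Fin r₂) ℝ} {W₃ U₃ : Matrix (Fin p₃) (Fin r₃) ℝ}

/-- `(1 - W₂W₂ᵀ ⊗ W₃W₃ᵀ)(U₂U₂ᵀ ⊗ U₃U₃ᵀ)` splits into two Kronecker products, each fixed by a
Kronecker product of projections of ranks at most `2r₂` and `2r₃` (onto `span(W₂, U₂)`, resp.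
`span(W₃, U₃)`, in one factor), which is how `tauP` enters. -/
lemma norm_mul_one_sub_kronecker_mul_kronecker_le (hW₂ : OrthoCols W₂) (hU₂ : OrthoCols U₂)
    (hU₃ : OrthoCols U₃) :
    ‖Z * ((1 - (W₂ * W₂ᵀ) ⊗ₖ (W₃ * W₃ᵀ)) * ((U₂ * U₂ᵀ) ⊗ₖ (U₃ * U₃ᵀ)))‖ ≤
      tauP r₂ r₃ Z * (sinTheta W₂ U₂ + sinTheta W₃ U₃) := by
  have habsorb : ∀ {k q : ℕ} {K : Matrix (Fin q) (Fin q) ℝ} {W U : Matrix (Fin q) (Fin k) ℝ},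
      K * W = W → K * U = U → K * ((1 - W * Wᵀ) * (U * Uᵀ)) = (1 - W * Wᵀ) * (U * Uᵀ) := by
    intro k q K W U hW hU
    simp only [Matrix.mul_sub, Matrix.sub_mul, Matrix.one_mul, ← Matrix.mul_assoc, hW, hU]
  obtain ⟨K₂, hK₂, hrK₂, hK₂W, hK₂U⟩ := exists_isOrthProj_rank_le_two_mul W₂ U₂
  obtain ⟨K₃, hK₃, hrK₃, hK₃W, hK₃U⟩ := exists_isOrthProj_rank_le_two_mul W₃ U₃
  have hrW₂ : (W₂ * W₂ᵀ).rank ≤ 2 * r₂ := (rank_mul_transpose_le W₂).trans (by omega)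
  have hrU₃ : (U₃ * U₃ᵀ).rank ≤ 2 * r₃ := (rank_mul_transpose_le U₃).trans (by omega)
  have h₂ : ‖Z * (((1 - W₂ * W₂ᵀ) * (U₂ * U₂ᵀ)) ⊗ₖ (U₃ * U₃ᵀ))‖ ≤
      tauP r₂ r₃ Z * sinTheta W₂ U₂ := by
    refine (norm_mul_kronecker_le_tauP_mul Z hK₂ hU₃.isOrthProj hrK₂ hrU₃
      (habsorb hK₂W hK₂U) hU₃.isOrthProj.2).trans ?_
    gcongr
    · exact tauP_nonneg Z
    exact (mul_le_of_le_one_right (norm_nonneg _) hU₃.isOrthProj.norm_le_one).trans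
      (norm_one_sub_mul_mul_transpose_le_sinTheta W₂ hU₂)
  have h₃ : ‖Z * ((W₂ * W₂ᵀ * (U₂ * U₂ᵀ)) ⊗ₖ ((1 - W₃ * W₃ᵀ) * (U₃ * U₃ᵀ)))‖ ≤
      tauP r₂ r₃ Z * sinTheta W₃ U₃ := by
    refine (norm_mul_kronecker_le_tauP_mul Z hW₂.isOrthProj hK₃ hrW₂ hrK₃
      (by rw [← Matrix.mul_assoc, hW₂.isOrthProj.2]) (habsorb hK₃W hK₃U)).trans ?_
    gcongr
    · exact tauP_nonneg Z
    refine (mul_le_of_le_one_left (norm_nonneg _) ?_).trans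
      (norm_one_sub_mul_mul_transpose_le_sinTheta W₃ hU₃)
    exact (l2_opNorm_mul _ _).trans (mul_le_one₀ hW₂.isOrthProj.norm_le_one (norm_nonneg _)
      hU₂.isOrthProj.norm_le_one)
  rw [one_sub_kronecker_mul_kronecker, Matrix.mul_add, mul_add]
  exact (norm_add_le _ _).trans (add_le_add h₂ h₃)

lemma norm_transpose_mul_mul_kronecker_le {r : ℕ} {V : Matrix (Fin p₁) (Fin r) ℝ}
    (hV : OrthoCols V) (hW₂ : OrthoCols W₂) (hU₂ : OrthoCols U₂) (hU₃ : OrthoCols U₃) :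
    ‖Vᵀ * Z * ((U₂ * U₂ᵀ) ⊗ₖ (U₃ * U₃ᵀ))‖ ≤
      tauP r₂ r₃ Z * (sinTheta W₂ U₂ + sinTheta W₃ U₃) +
        ‖Vᵀ * Z * ((W₂ * W₂ᵀ) ⊗ₖ (W₃ * W₃ᵀ))‖ := by
  have hsplit : Vᵀ * Z * ((U₂ * U₂ᵀ) ⊗ₖ (U₃ * U₃ᵀ)) =
      Vᵀ * (Z * ((1 - (W₂ * W₂ᵀ) ⊗ₖ (W₃ * W₃ᵀ)) * ((U₂ * U₂ᵀ) ⊗ₖ (U₃ * U₃ᵀ)))) +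
        Vᵀ * Z * ((W₂ * W₂ᵀ) ⊗ₖ (W₃ * W₃ᵀ)) * ((U₂ * U₂ᵀ) ⊗ₖ (U₃ * U₃ᵀ)) := by
    simp only [Matrix.sub_mul, Matrix.mul_sub, Matrix.one_mul, Matrix.mul_assoc]
    abel
  rw [hsplit]
  refine (norm_add_le _ _).trans (add_le_add ?_ ?_)
  · exact (hV.norm_transpose_mul_le _).trans
      (norm_mul_one_sub_kronecker_mul_kronecker_le Z hW₂ hU₂ hU₃)
  · exact (l2_opNorm_mul _ _).trans (mul_le_of_le_one_right (norm_nonneg _)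
      (hU₂.isOrthProj.kronecker hU₃.isOrthProj).norm_le_one)

end TuckerCompression

lemma enorm2_row_one_sub_mul_mul_le {m n k : Type*} [Fintype m] [Fintype n] [Fintype k]
    [DecidableEq m] [DecidableEq n] [DecidableEq k] {r : ℕ} (U : Matrix m (Fin r) ℝ)
    (Z : Matrix m n ℝ) {P : Matrix n n ℝ} (hP : P * P = P) (P' : Matrix n n ℝ) (X : Matrix n k ℝ)
    (i : m) {a b y₁ y₂ : ℝ} (ha : ‖Uᵀ * Z * P‖ ≤ a) (hb : ‖Z * ((1 - P') * P)‖ ≤ b)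
    (hy₁ : ‖P * X‖ ≤ y₁) (hy₂ : ‖P * X‖ ≤ y₂) :
    enorm2 (((1 - U * Uᵀ) * Z * P * X : Matrix m k ℝ) i) ≤
      twoInf U * a * y₁ + b * y₁ + enorm2 ((Z * P' : Matrix m n ℝ) i) * y₂ := by
  have hsplit : (1 - U * Uᵀ) * Z * P * X =
      U * -(Uᵀ * Z * P * (P * X)) + Z * ((1 - P') * P) * (P * X) + Z * P' * (P * X) := by
    have hPX : P * (P * X) = P * X := by rw [← Matrix.mul_assoc, hP]
    simp only [Matrix.sub_mul, Matrix.mul_sub, Matrix.one_mul, Matrix.mul_neg, Matrix.mul_assoc,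
      hPX]
    abel
  have htw : 0 ≤ twoInf U := (enorm2_nonneg _).trans (enorm2_row_le_twoInf U i)
  rw [hsplit]
  refine (enorm2_add_le _ _).trans (add_le_add ((enorm2_add_le _ _).trans (add_le_add ?_ ?_)) ?_)
  · refine (enorm2_row_mul_le _ _ _).trans ?_
    rw [norm_neg, mul_assoc]
    exact mul_le_mul (enorm2_row_le_twoInf U i) ((l2_opNorm_mul _ _).trans
      (mul_le_mul ha hy₁ (norm_nonneg _) ((norm_nonneg _).trans ha))) (norm_nonneg _) htw
  · exact (enorm2_row_le_norm _ i).trans ((l2_opNorm_mul _ _).trans (mul_le_mul hb hy₁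
      (norm_nonneg _) ((norm_nonneg _).trans hb)))
  · exact (enorm2_row_mul_le _ _ _).trans (mul_le_mul_of_nonneg_left hy₂ (enorm2_nonneg _))

lemma enorm2_row_one_sub_mul_mul_transpose_mul_le {m n k : Type*} [Fintype m] [Fintype n]
    [Fintype k] [DecidableEq m] [DecidableEq n] [DecidableEq k] {r s : ℕ} (U : Matrix m (Fin r) ℝ)
    (Z : Matrix m n ℝ) {P : Matrix n n ℝ} (hP : IsOrthProj P) (P' : Matrix n n ℝ)
    (Ũ : Matrix m (Fin s) ℝ) (M : Matrix (Fin s) k ℝ) (i : m) {a b y₁ y₂ μ : ℝ}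
    (ha : ‖Uᵀ * Z * P‖ ≤ a) (hb : ‖Z * ((1 - P') * P)‖ ≤ b) (hy₁ : ‖Ũᵀ * (Z * P)‖ ≤ y₁)
    (hy₂ : ‖Ũᵀ * (Z * P)‖ ≤ y₂) (hM : ‖M‖ ≤ μ) :
    enorm2 (((1 - U * Uᵀ) * Z * P * Zᵀ * Ũ * M : Matrix m k ℝ) i) ≤
      twoInf U * a * (y₁ * μ) + b * (y₁ * μ) + enorm2 ((Z * P' : Matrix m n ℝ) i) * (y₂ * μ) := by
  have hPX : P * (Zᵀ * Ũ * M) = (Ũᵀ * (Z * P))ᵀ * M := by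
    simp only [transpose_mul, transpose_transpose, hP.1, Matrix.mul_assoc]
  have hPX_le : ∀ {y}, ‖Ũᵀ * (Z * P)‖ ≤ y → ‖P * (Zᵀ * Ũ * M)‖ ≤ y * μ := fun hy => by
    rw [hPX]
    refine (l2_opNorm_mul _ _).trans (mul_le_mul ?_ hM (norm_nonneg _) ((norm_nonneg _).trans hy))
    rwa [l2_opNorm_transpose]
  simpa only [Matrix.mul_assoc] using
    enorm2_row_one_sub_mul_mul_le U Z hP.2 P' (Zᵀ * Ũ * M) i ha hb (hPX_le hy₁) (hPX_le hy₂)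


theorem stmt14_general {p₁ p₂ p₃ r₁ r₂ r₃ : ℕ}
    (lam : ℝ) (hlam : 0 < lam)
    (T1 : Matrix (Fin p₁) (Fin p₂ × Fin p₃) ℝ)
    (U1 : Matrix (Fin p₁) (Fin r₁) ℝ) (L1 : Matrix (Fin r₁) (Fin r₁) ℝ)
    (V1 : Matrix (Fin p₂ × Fin p₃) (Fin r₁) ℝ)
    (hSVD : IsCompactSVD T1 U1 L1 V1)
    (U2 : Matrix (Fin p₂) (Fin r₂) ℝ) (U3 : Matrix (Fin p₃) (Fin r₃) ℝ)
    (hU2 : OrthoCols U2)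
    (Z1 : Matrix (Fin p₁) (Fin p₂ × Fin p₃) ℝ)
    (Uh2 : Matrix (Fin p₂) (Fin r₂) ℝ) (Uh3 : Matrix (Fin p₃) (Fin r₃) ℝ)
    (Ut2 : Matrix (Fin p₂) (Fin r₂) ℝ) (Ut3 : Matrix (Fin p₃) (Fin r₃) ℝ)
    (hUh2 : OrthoCols Uh2) (hUh3 : OrthoCols Uh3)
    (hUt2 : OrthoCols Ut2)
    (Uh1 : Matrix (Fin p₁) (Fin r₁) ℝ) (hUh1 : OrthoCols Uh1)
    (Lh : Matrix (Fin r₁) (Fin r₁) ℝ)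
    (hLhs : lam / 2 ≤ sval Lh r₁)
    (m : Fin p₁) :
    enorm2 ((((1 - U1 * U1ᵀ) * Z1 * ((Uh2 * Uh2ᵀ) ⊗ₖ (Uh3 * Uh3ᵀ)) * Z1ᵀ * Uh1 *
        (Lh⁻¹ * Lh⁻¹) : Matrix (Fin p₁) (Fin r₁) ℝ)) m) ≤
      (4 / lam ^ 2) * twoInf U1 * tauP r₂ r₃ Z1 *
          (tauP r₂ r₃ Z1 * (sinTheta U2 Uh2 + sinTheta U3 Uh3) +
            spec (U1ᵀ * Z1 * ((U2 * U2ᵀ) ⊗ₖ (U3 * U3ᵀ)))) +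
        (16 / lam ^ 2) * (tauP r₂ r₃ Z1) ^ 2 * (sinTheta Ut2 Uh2 + sinTheta Ut3 Uh3) +
        (4 / lam ^ 2) *
          enorm2 ((Z1 * ((Ut2 * Ut2ᵀ) ⊗ₖ (Ut3 * Ut3ᵀ)) :
              Matrix (Fin p₁) (Fin p₂ × Fin p₃) ℝ) m) *
          (tauP r₂ r₃ Z1 * sinTheta Uh1 U1 +
            tauP r₂ r₃ Z1 * (sinTheta U2 Uh2 + sinTheta U3 Uh3) +
            spec (U1ᵀ * Z1 * ((U2 * U2ᵀ) ⊗ₖ (U3 * U3ᵀ)))) := by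
  set P := (Uh2 * Uh2ᵀ) ⊗ₖ (Uh3 * Uh3ᵀ)
  have hUZP := norm_transpose_mul_mul_kronecker_le Z1 (W₃ := U3) hSVD.1 hU2 hUh2 hUh3
  have hZP := norm_mul_kronecker_mul_transpose_le_tauP Z1 hUh2 hUh3
  have hLinv := norm_inv_le_of_le_sval (L := Lh) (half_pos hlam) (by simpa using hLhs)
  have hM : ‖Lh⁻¹ * Lh⁻¹‖ ≤ (lam / 2)⁻¹ * (lam / 2)⁻¹ := (l2_opNorm_mul _ _).trans (by gcongr)
  have hY : ‖Uh1ᵀ * (Z1 * P)‖ ≤ sinTheta Uh1 U1 * tauP r₂ r₃ Z1 + (tauP r₂ r₃ Z1 *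
      (sinTheta U2 Uh2 + sinTheta U3 Uh3) + ‖U1ᵀ * Z1 * ((U2 * U2ᵀ) ⊗ₖ (U3 * U3ᵀ))‖) := by
    refine (norm_transpose_mul_le_sinTheta_mul_add hSVD.1 hUh1 _).trans ?_
    rw [← Matrix.mul_assoc]
    gcongr
    exact sinTheta_nonneg _ _
  rw [spec_eq_norm]
  refine (enorm2_row_one_sub_mul_mul_transpose_mul_le U1 Z1
    (hUh2.isOrthProj.kronecker hUh3.isOrthProj) _ Uh1 _ m hUZP
    (norm_mul_one_sub_kronecker_mul_kronecker_le Z1 (W₃ := Ut3) hUt2 hUh2 hUh3)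
    ((hUh1.norm_transpose_mul_le _).trans hZP) hY hM).trans ?_
  have := sinTheta_nonneg Ut2 Uh2
  have := sinTheta_nonneg Ut3 Uh3
  have := tauP_nonneg (r₂ := r₂) (r₃ := r₃) Z1
  have hslack : 0 ≤ 12 / lam ^ 2 * tauP r₂ r₃ Z1 ^ 2 * (sinTheta Ut2 Uh2 + sinTheta Ut3 Uh3) := by
    positivity
  linear_combination hslack

/-- deterministic bound for the quadratic term. -/
theorem stmt14 {p₁ p₂ p₃ r₁ r₂ r₃ : ℕ}
    (lam : ℝ) (hlam : 0 < lam)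
    (T1 : Matrix (Fin p₁) (Fin p₂ × Fin p₃) ℝ)
    (U1 : Matrix (Fin p₁) (Fin r₁) ℝ) (L1 : Matrix (Fin r₁) (Fin r₁) ℝ)
    (V1 : Matrix (Fin p₂ × Fin p₃) (Fin r₁) ℝ)
    (hSVD : IsCompactSVD T1 U1 L1 V1) (hsr : lam ≤ sval T1 r₁)
    (U2 : Matrix (Fin p₂) (Fin r₂) ℝ) (U3 : Matrix (Fin p₃) (Fin r₃) ℝ)
    (hU2 : OrthoCols U2) (hU3 : OrthoCols U3)
    (hV : ((U2 * U2ᵀ) ⊗ₖ (U3 * U3ᵀ)) * V1 = V1)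
    (Z1 : Matrix (Fin p₁) (Fin p₂ × Fin p₃) ℝ)
    (Uh2 : Matrix (Fin p₂) (Fin r₂) ℝ) (Uh3 : Matrix (Fin p₃) (Fin r₃) ℝ)
    (Ut2 : Matrix (Fin p₂) (Fin r₂) ℝ) (Ut3 : Matrix (Fin p₃) (Fin r₃) ℝ)
    (hUh2 : OrthoCols Uh2) (hUh3 : OrthoCols Uh3)
    (hUt2 : OrthoCols Ut2) (hUt3 : OrthoCols Ut3)
    (Uh1 : Matrix (Fin p₁) (Fin r₁) ℝ) (hUh1 : OrthoCols Uh1)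
    (Lh : Matrix (Fin r₁) (Fin r₁) ℝ) (hLh : IsUnit Lh.det)
    (hLhs : lam / 2 ≤ sval Lh r₁)
    (m : Fin p₁) :
    enorm2 ((((1 - U1 * U1ᵀ) * Z1 * ((Uh2 * Uh2ᵀ) ⊗ₖ (Uh3 * Uh3ᵀ)) * Z1ᵀ * Uh1 *
        (Lh⁻¹ * Lh⁻¹) : Matrix (Fin p₁) (Fin r₁) ℝ)) m) ≤
      (4 / lam ^ 2) * twoInf U1 * tauP r₂ r₃ Z1 *
          (tauP r₂ r₃ Z1 * (sinTheta U2 Uh2 + sinTheta U3 Uh3) +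
            spec (U1ᵀ * Z1 * ((U2 * U2ᵀ) ⊗ₖ (U3 * U3ᵀ)))) +
        (16 / lam ^ 2) * (tauP r₂ r₃ Z1) ^ 2 * (sinTheta Ut2 Uh2 + sinTheta Ut3 Uh3) +
        (4 / lam ^ 2) *
          enorm2 ((Z1 * ((Ut2 * Ut2ᵀ) ⊗ₖ (Ut3 * Ut3ᵀ)) :
              Matrix (Fin p₁) (Fin p₂ × Fin p₃) ℝ) m) *
          (tauP r₂ r₃ Z1 * sinTheta Uh1 U1 +
            tauP r₂ r₃ Z1 * (sinTheta U2 Uh2 + sinTheta U3 Uh3) +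
            spec (U1ᵀ * Z1 * ((U2 * U2ᵀ) ⊗ₖ (U3 * U3ᵀ)))) :=
  stmt14_general lam hlam T1 U1 L1 V1 hSVD U2 U3 hU2 Z1 Uh2 Uh3 Ut2 Ut3 hUh2 hUh3 hUt2 Uh1 hUh1 Lh
    hLhs m

end
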